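/- The hyperplane H(n) = {y ∈ ℝ^{n+1} : y_0 + ... + y_n = 0} is the union over i = 0,...,n of the simplicial cones C(n,i) = {y ∈ H(n) : y_i + y_{i+1} + ... + y_{i+t} ≤ 0 for all t = 0,...,n-1}, where indices are taken modulo n+1, and these cones have pairwise disjoint interiors. -/

import Mathlib

/-- The hyperplane `H(n) = {y ∈ ℝ^{n+1} : y_0 + ⋯ + y_n = 0}`. -/
def hyperplaneH (n : ℕ) : Set (Fin (n + 1) → ℝ) :=
  {y | ∑ i, y i = 0}

/-- The simplicial cone `C(n,i) ⊆ H(n)` cut out by requiring all consecutive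
cyclic partial sums `y_i + y_{i+1} + ⋯ + y_{i+t} ≤ 0` for `t = 0,…,n-1`
(indices mod `n+1`). -/
def coneC (n : ℕ) (i : Fin (n + 1)) : Set (Fin (n + 1) → ℝ) :=
  {y | y ∈ hyperplaneH n ∧
    ∀ t < n, ∑ s ∈ Finset.range (t + 1), y (i + (Fin.ofNat (n + 1) s)) ≤ 0}

/-!
For `y ∈ H(n)` the prefix sums `P j = y 0 + ⋯ + y (j-1)` are cyclic in `j` (the total sum is
`0`), and the cyclic partial sum of length `t + 1` starting at `i` is `P (i + t + 1) - P i`.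
Hence `y ∈ C(n,i)` exactly when `P i` is a maximal value of `P`, and every `y ∈ H(n)` lies in
the cone of an index maximising `P`. Each inequality `P j ≤ P i`, `j ≠ i`, is strict at some
point of `C(n,i)` (the point whose prefix sums are the indicator of `i`), so it is strict on the
relative interior: there `P i` is the unique maximum, and two interiors cannot meet.
-/

open Topology

theorem exists_lineMap_mem_of_mem_intrinsicInterior {V : Type*} [AddCommGroup V] [Module ℝ V]
    [TopologicalSpace V] [IsTopologicalAddGroup V] [ContinuousSMul ℝ V] {s : Set V} {y z : V}
    (hy : y ∈ intrinsicInterior ℝ s) (hz : z ∈ s) :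
    ∃ r > (1 : ℝ), AffineMap.lineMap z y r ∈ s := by
  obtain ⟨x, hx, rfl⟩ := hy
  let g : ℝ → affineSpan ℝ s := fun r =>
    ⟨AffineMap.lineMap z x r, AffineMap.lineMap_mem r (subset_affineSpan ℝ s hz) x.2⟩
  have hg : Continuous g := AffineMap.lineMap_continuous.subtype_mk _
  have hg1 : g 1 = x := Subtype.ext (AffineMap.lineMap_apply_one _ _)
  have hnhds : ∀ᶠ r in 𝓝 (1 : ℝ), g r ∈ interior (Subtype.val ⁻¹' s) :=
    hg.continuousAt.preimage_mem_nhds (hg1 ▸ isOpen_interior.mem_nhds hx)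
  have hright : ∀ᶠ r in 𝓝[>] (1 : ℝ), g r ∈ interior (Subtype.val ⁻¹' s) :=
    nhdsWithin_le_nhds hnhds
  obtain ⟨r, hr, hr1⟩ := (hright.and self_mem_nhdsWithin).exists
  exact ⟨r, hr1, interior_subset (s := Subtype.val ⁻¹' s) hr⟩

theorem AffineMap.lt_zero_of_mem_intrinsicInterior {V : Type*} [AddCommGroup V] [Module ℝ V]
    [TopologicalSpace V] [IsTopologicalAddGroup V] [ContinuousSMul ℝ V] {s : Set V} {y z : V}
    (f : V →ᵃ[ℝ] ℝ) (hf : ∀ x ∈ s, f x ≤ 0) (hz : z ∈ s) (hfz : f z < 0)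
    (hy : y ∈ intrinsicInterior ℝ s) : f y < 0 := by
  obtain ⟨r, hr, hmem⟩ := exists_lineMap_mem_of_mem_intrinsicInterior hy hz
  have hline := hf _ hmem
  rw [AffineMap.apply_lineMap, AffineMap.lineMap_apply_module, smul_eq_mul, smul_eq_mul] at hline
  nlinarith [hf y (intrinsicInterior_subset hy)]

section PrefixSum

open Finset Fin.NatCast

variable {n : ℕ}

def prefixSum (j : Fin (n + 1)) : (Fin (n + 1) → ℝ) →ₗ[ℝ] ℝ :=
  ∑ k ∈ range j, LinearMap.proj (k : Fin (n + 1))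

theorem prefixSum_apply (j : Fin (n + 1)) (y : Fin (n + 1) → ℝ) :
    prefixSum j y = ∑ k ∈ range j, y k := by
  simp [prefixSum]

theorem prefixSum_add_one {y : Fin (n + 1) → ℝ} (hy : y ∈ hyperplaneH n) (j : Fin (n + 1)) :
    prefixSum (j + 1) y = prefixSum j y + y j := by
  rcases Fin.eq_castSucc_or_eq_last j with ⟨j, rfl⟩ | rfl
  · simp [Fin.coeSucc_eq_succ, prefixSum_apply, sum_range_succ]
  · have : ∑ k ∈ range (n + 1), y k = 0 := by
      rw [← hy, ← Fin.sum_univ_eq_sum_range]; simp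
    simpa [prefixSum_apply, sum_range_succ, Fin.natCast_eq_last] using this.symm

theorem sum_range_add_eq_prefixSum_sub {y : Fin (n + 1) → ℝ} (hy : y ∈ hyperplaneH n)
    (i : Fin (n + 1)) (L : ℕ) :
    ∑ s ∈ range L, y (i + s) = prefixSum (i + (L : Fin (n + 1))) y - prefixSum i y := by
  induction L with
  | zero => simp
  | succ L ih => rw [sum_range_succ, ih, Nat.cast_succ, ← add_assoc, prefixSum_add_one hy]; ring

theorem exists_mem_hyperplaneH_prefixSum_eq (P : Fin (n + 1) → ℝ) :
    ∃ z ∈ hyperplaneH n, ∀ j, prefixSum j z = P j - P 0 := by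
  refine ⟨fun k => P (k + 1) - P k, ?_, fun j => ?_⟩
  · simp only [hyperplaneH, Set.mem_ofPred_eq, sum_sub_distrib, sub_eq_zero]
    exact Fintype.sum_equiv (Equiv.addRight 1) _ _ (fun _ => rfl)
  · rw [prefixSum_apply]
    simpa using sum_range_sub (fun k : ℕ => P k) j

theorem mem_coneC_iff {y : Fin (n + 1) → ℝ} (hy : y ∈ hyperplaneH n) (i : Fin (n + 1)) :
    y ∈ coneC n i ↔ ∀ j, prefixSum j y ≤ prefixSum i y := by
  have hsum (t : ℕ) := sum_range_add_eq_prefixSum_sub hy i (t + 1)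
  simp only [coneC, Set.mem_ofPred_eq, Fin.ofNat_eq_cast, hy, true_and]
  refine ⟨fun h j => ?_, fun h t _ => by rw [hsum, sub_nonpos]; exact h _⟩
  obtain rfl | hji := eq_or_ne j i
  · exact le_rfl
  have hpos : (j - i).val ≠ 0 := by simpa [Fin.ext_iff, sub_eq_zero] using hji
  obtain ⟨t, ht⟩ := Nat.exists_eq_add_one_of_ne_zero hpos
  have hj : i + ((t + 1 : ℕ) : Fin (n + 1)) = j := by
    rw [← ht, Fin.cast_val_eq_self, add_sub_cancel]
  have := h t (by have := (j - i).isLt; omega)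
  rwa [hsum, hj, sub_nonpos] at this

theorem prefixSum_lt_of_mem_intrinsicInterior {i j : Fin (n + 1)} {y : Fin (n + 1) → ℝ}
    (hy : y ∈ intrinsicInterior ℝ (coneC n i)) (hji : j ≠ i) :
    prefixSum j y < prefixSum i y := by
  obtain ⟨z, hzH, hz⟩ := exists_mem_hyperplaneH_prefixSum_eq (Pi.single i (1 : ℝ))
  have hzC : z ∈ coneC n i := (mem_coneC_iff hzH i).2 fun k => by
    simp only [hz, sub_le_sub_iff_right, Pi.single_eq_same]
    rw [Pi.single_apply]
    split_ifs <;> norm_num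
  have key := (prefixSum j - prefixSum i).toAffineMap.lt_zero_of_mem_intrinsicInterior
    (fun x hx => by simpa using (mem_coneC_iff hx.1 i).1 hx j) hzC
    (by simp [hz, hji]) hy
  simpa using key

end PrefixSum

/-- `H(n)` is the union of the cones `C(n,0), …, C(n,n)`, and these cones
have pairwise disjoint (relative) interiors. -/
theorem hyperplane_eq_union_cones (n : ℕ) :
    (⋃ i : Fin (n + 1), coneC n i) = hyperplaneH n ∧
    Pairwise (fun i j : Fin (n + 1) =>
      Disjoint (intrinsicInterior ℝ (coneC n i)) (intrinsicInterior ℝ (coneC n j))) := by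
  refine ⟨Set.Subset.antisymm (Set.iUnion_subset fun i y hy => hy.1) fun y hy => ?_, ?_⟩
  · obtain ⟨i, hi⟩ := Finite.exists_max fun j => prefixSum j y
    exact Set.mem_iUnion.2 ⟨i, (mem_coneC_iff hy i).2 hi⟩
  · intro i j hij
    refine Set.disjoint_left.2 fun y hyi hyj => ?_
    exact (prefixSum_lt_of_mem_intrinsicInterior hyi hij.symm).asymm
      (prefixSum_lt_of_mem_intrinsicInterior hyj hij)
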